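/- arXiv:1209.3672 — 3 statements merged into one kernel-verified Lean document; each statement's English description precedes it below -/
import Mathlib

section
/- Let f: ℝ → [0,1] be differentiable and let M, M̂ ∈ ℝ^{d1×d2} satisfy ‖M‖_∞ ≤ α and ‖M̂‖_∞ ≤ α. Then d_H²(f(M), f(M̂)) ≥ (inf_{|ξ|≤α} (f'(ξ))²/(8 f(ξ)(1−f(ξ)))) · ‖M − M̂‖_F²/(d1 d2). -/
open Matrix

noncomputable section

/-- Frobenius norm. -/
def frobeniusNorm {d1 d2 : ℕ} (M : Matrix (Fin d1) (Fin d2) ℝ) : ℝ :=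
  Real.sqrt (∑ i, ∑ j, (M i j) ^ 2)

/-- Scalar squared Hellinger distance. -/
def hellingerSq (p q : ℝ) : ℝ :=
  (Real.sqrt p - Real.sqrt q) ^ 2 + (Real.sqrt (1 - p) - Real.sqrt (1 - q)) ^ 2

/-- Averaged squared Hellinger distance between matrices. -/
def hellingerSqM {d1 d2 : ℕ} (P Q : Matrix (Fin d1) (Fin d2) ℝ) : ℝ :=
  (1 / (d1 * d2 : ℝ)) * ∑ i, ∑ j, hellingerSq (P i j) (Q i j)

/-!
Writing `√p = sin θ` and `√(1 - p) = cos θ`, the squared Hellinger distance between `p` and `q` is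
the squared chord `2 - 2 cos (θ_p - θ_q)` of the quarter circle, which is at least
`(θ_p - θ_q)² / 2` because the angles differ by at most `π / 2`. Along `θ(t) = arcsin √(f t)` one has
`θ'² = f'² / (4 f (1 - f))`, so by the mean value theorem `(θ(x) - θ(y))² ≥ 2c (x - y)²` as soon as
`c > 0` bounds `f'² / (8 f (1 - f))` from below between `x` and `y`; such a bound forces `0 < f < 1`
and `f' ≠ 0` there. Summing over the entries gives the theorem, which is trivial when the infimum
is not positive.
-/

open Real Set

lemma sq_div_two_le_two_sub_two_mul_cos {u : ℝ} (hu : |u| ≤ π / 2) :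
    u ^ 2 / 2 ≤ 2 - 2 * cos u := by
  wlog hu0 : 0 < u generalizing u
  · rcases (not_lt.mp hu0).lt_or_eq with hneg | rfl
    · simpa using this (u := -u) (by rwa [abs_neg]) (by linarith)
    · simp
  have ht : u / 2 < 4 / 5 := by linarith [abs_of_pos hu0 ▸ hu, pi_lt_d2]
  have hsin : u / 2 - (u / 2) ^ 3 / 6 < sin (u / 2) := sin_gt_sub_cube (by positivity)
  have hcos : 2 - 2 * cos u = 4 * sin (u / 2) ^ 2 := by
    rw [sin_sq_eq_half_sub, mul_div_cancel₀ _ two_ne_zero]; ring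
  have hsq : (u / 2) ^ 2 < (4 / 5) ^ 2 := pow_lt_pow_left₀ ht (by positivity) two_ne_zero
  have hfactor : (7 / 8 : ℝ) ≤ 1 - (u / 2) ^ 2 / 6 := by linarith
  have hlower : 7 / 8 * (u / 2) ≤ sin (u / 2) := by nlinarith
  rw [hcos]
  nlinarith

lemma hellingerSq_nonneg (p q : ℝ) : 0 ≤ hellingerSq p q := by
  unfold hellingerSq; positivity

lemma hellingerSq_comm (p q : ℝ) : hellingerSq p q = hellingerSq q p := by
  unfold hellingerSq; ring

lemma hellingerSq_eq_two_sub_two_mul_cos {p q : ℝ} (hp : p ∈ Icc 0 1) (hq : q ∈ Icc 0 1) :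
    hellingerSq p q = 2 - 2 * cos (arcsin (√p) - arcsin (√q)) := by
  have sqrt_mem : ∀ r ∈ Icc (0 : ℝ) 1, -1 ≤ √r ∧ √r ≤ 1 := fun r hr =>
    ⟨by linarith [sqrt_nonneg r], sqrt_le_one.mpr hr.2⟩
  rw [cos_sub, sin_arcsin (sqrt_mem p hp).1 (sqrt_mem p hp).2,
    sin_arcsin (sqrt_mem q hq).1 (sqrt_mem q hq).2, cos_arcsin, cos_arcsin,
    sq_sqrt hp.1, sq_sqrt hq.1, hellingerSq]
  linear_combination sq_sqrt hp.1 + sq_sqrt hq.1 + sq_sqrt (sub_nonneg.mpr hp.2) +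
    sq_sqrt (sub_nonneg.mpr hq.2)

lemma HasDerivAt.arcsin_sqrt {f : ℝ → ℝ} {f' t : ℝ} (hf : HasDerivAt f f' t) (h0 : 0 < f t)
    (h1 : f t < 1) :
    HasDerivAt (fun s => arcsin (√(f s))) (f' / (2 * √(f t * (1 - f t)))) t := by
  have hsqrt : √(f t) < 1 := sqrt_one ▸ sqrt_lt_sqrt h0.le h1
  refine ((hasDerivAt_arcsin (by linarith [sqrt_nonneg (f t)]) hsqrt.ne).comp t
    ((hasDerivAt_sqrt h0.ne').comp t hf)).congr_deriv ?_
  have : 0 < √(1 - f t) := sqrt_pos.mpr (sub_pos.mpr h1)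
  rw [sq_sqrt h0.le, sqrt_mul h0.le]
  field_simp [(sqrt_pos.mpr h0).ne']

lemma mem_Ioo_of_sq_div_pos {a p : ℝ} (h : 0 < a ^ 2 / (8 * p * (1 - p))) : p ∈ Ioo 0 1 := by
  have hden : 0 < p * (1 - p) := by
    rcases div_pos_iff.mp h with ⟨-, hden⟩ | ⟨hneg, -⟩
    · linarith
    · linarith [sq_nonneg a]
  rcases mul_pos_iff.mp hden with ⟨hp, hq⟩ | ⟨hp, hq⟩
  · exact ⟨hp, by linarith⟩
  · linarith

lemma mul_sq_sub_le_hellingerSq_of_lt {f : ℝ → ℝ} {c x y : ℝ} (hxy : x < y) (hc : 0 < c)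
    (hcf : ∀ t ∈ Icc x y, c ≤ deriv f t ^ 2 / (8 * f t * (1 - f t))) :
    c * (x - y) ^ 2 ≤ hellingerSq (f x) (f y) := by
  have hpos : ∀ t ∈ Icc x y, 0 < deriv f t ^ 2 / (8 * f t * (1 - f t)) :=
    fun t ht => hc.trans_le (hcf t ht)
  have hf01 : ∀ t ∈ Icc x y, f t ∈ Ioo 0 1 := fun t ht => mem_Ioo_of_sq_div_pos (hpos t ht)
  have hdiff : ∀ t ∈ Icc x y, DifferentiableAt ℝ f t := fun t ht =>
    differentiableAt_of_deriv_ne_zero fun h => by simpa [h] using hpos t ht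
  set θ : ℝ → ℝ := fun s => arcsin (√(f s))
  set θ' : ℝ → ℝ := fun s => deriv f s / (2 * √(f s * (1 - f s)))
  have hf_cont : ContinuousOn f (Icc x y) := fun t ht =>
    (hdiff t ht).continuousAt.continuousWithinAt
  have hθ : ContinuousOn θ (Icc x y) := continuous_arcsin.comp_continuousOn hf_cont.sqrt
  obtain ⟨ξ, hξ, hslope⟩ := exists_hasDerivAt_eq_slope θ θ' hxy hθ fun t ht =>
    (hdiff t (Ioo_subset_Icc_self ht)).hasDerivAt.arcsin_sqrt
      (hf01 t (Ioo_subset_Icc_self ht)).1 (hf01 t (Ioo_subset_Icc_self ht)).2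
  obtain ⟨hξ0, hξ1⟩ := hf01 ξ (Ioo_subset_Icc_self hξ)
  have hθ'_sq : θ' ξ ^ 2 = 2 * (deriv f ξ ^ 2 / (8 * f ξ * (1 - f ξ))) := by
    have : 0 < 1 - f ξ := sub_pos.mpr hξ1
    simp only [θ', div_pow, mul_pow, sq_sqrt (mul_pos hξ0 this).le]
    field_simp
    ring
  have hmvt : (θ x - θ y) ^ 2 = θ' ξ ^ 2 * (x - y) ^ 2 := by
    rw [hslope, div_pow]
    field_simp [sub_ne_zero.mpr hxy.ne']
    ring
  have hθ_mem : ∀ s, θ s ∈ Icc 0 (π / 2) := fun s =>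
    ⟨arcsin_nonneg.mpr (sqrt_nonneg _), arcsin_le_pi_div_two _⟩
  have hθ_dist : |θ x - θ y| ≤ π / 2 :=
    abs_sub_le_of_nonneg_of_le (hθ_mem x).1 (hθ_mem x).2 (hθ_mem y).1 (hθ_mem y).2
  calc c * (x - y) ^ 2
      ≤ θ' ξ ^ 2 * (x - y) ^ 2 / 2 := by
        rw [hθ'_sq]
        nlinarith [hcf ξ (Ioo_subset_Icc_self hξ), sq_nonneg (x - y)]
    _ = (θ x - θ y) ^ 2 / 2 := by rw [hmvt]
    _ ≤ 2 - 2 * cos (θ x - θ y) := sq_div_two_le_two_sub_two_mul_cos hθ_dist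
    _ = hellingerSq (f x) (f y) :=
        (hellingerSq_eq_two_sub_two_mul_cos (Ioo_subset_Icc_self (hf01 x (left_mem_Icc.mpr hxy.le)))
          (Ioo_subset_Icc_self (hf01 y (right_mem_Icc.mpr hxy.le)))).symm

lemma mul_sq_sub_le_hellingerSq {f : ℝ → ℝ} {c x y : ℝ} (hc : 0 < c)
    (hcf : ∀ t ∈ uIcc x y, c ≤ deriv f t ^ 2 / (8 * f t * (1 - f t))) :
    c * (x - y) ^ 2 ≤ hellingerSq (f x) (f y) := by
  rcases lt_trichotomy x y with hxy | rfl | hxy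
  · exact mul_sq_sub_le_hellingerSq_of_lt hxy hc (by rwa [uIcc_of_le hxy.le] at hcf)
  · simp [hellingerSq]
  · rw [hellingerSq_comm, ← neg_sub, neg_sq]
    exact mul_sq_sub_le_hellingerSq_of_lt hxy hc (by rwa [uIcc_of_ge hxy.le] at hcf)

lemma mul_frobeniusNorm_sq_div_le_hellingerSqM {d1 d2 : ℕ} {c : ℝ}
    {M N P Q : Matrix (Fin d1) (Fin d2) ℝ}
    (h : ∀ i j, c * (M i j - N i j) ^ 2 ≤ hellingerSq (P i j) (Q i j)) :
    c * frobeniusNorm (M - N) ^ 2 / (d1 * d2) ≤ hellingerSqM P Q := by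
  rw [frobeniusNorm, sq_sqrt (by positivity), hellingerSqM, one_div_mul_eq_div]
  gcongr
  rw [Finset.mul_sum]
  gcongr with i _
  rw [Finset.mul_sum]
  gcongr with j _
  exact h i j

lemma Real.sInf_le_of_sInf_pos {s : Set ℝ} {x : ℝ} (hs : 0 < sInf s) (hx : x ∈ s) :
    sInf s ≤ x :=
  csInf_le (not_not.mp fun h => hs.ne' (Real.sInf_of_not_bddBelow h)) hx

theorem hellinger_lower_bound_frobenius_general
    (d1 d2 : ℕ) (α : ℝ) (f : ℝ → ℝ) (M Mhat : Matrix (Fin d1) (Fin d2) ℝ)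
    (hM : ∀ i j, |M i j| ≤ α) (hMhat : ∀ i j, |Mhat i j| ≤ α) :
    hellingerSqM (M.map f) (Mhat.map f) ≥
      sInf ((fun ξ => (deriv f ξ) ^ 2 / (8 * f ξ * (1 - f ξ))) '' Set.Icc (-α) α) *
        frobeniusNorm (M - Mhat) ^ 2 / (d1 * d2) := by
  set c := sInf ((fun ξ => (deriv f ξ) ^ 2 / (8 * f ξ * (1 - f ξ))) '' Icc (-α) α)
  refine mul_frobeniusNorm_sq_div_le_hellingerSqM fun i j => ?_
  rcases le_or_gt c 0 with hc | hc
  · exact (mul_nonpos_of_nonpos_of_nonneg hc (sq_nonneg _)).trans (hellingerSq_nonneg _ _)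
  · refine mul_sq_sub_le_hellingerSq hc fun t ht => Real.sInf_le_of_sInf_pos hc ⟨t, ?_, rfl⟩
    exact uIcc_subset_Icc (abs_le.mp (hM i j)) (abs_le.mp (hMhat i j)) ht

/-- **Lemma:** for `‖M‖_∞, ‖M̂‖_∞ ≤ α`,
`d_H²(f(M), f(M̂)) ≥ (inf_{|ξ|≤α} f'(ξ)²/(8 f(ξ)(1-f(ξ)))) ‖M - M̂‖_F²/(d1 d2)`. -/
theorem hellinger_lower_bound_frobenius
    (d1 d2 : ℕ) (α : ℝ) (f : ℝ → ℝ) (M Mhat : Matrix (Fin d1) (Fin d2) ℝ)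
    (hf : Differentiable ℝ f) (hf01 : ∀ x, f x ∈ Set.Icc (0 : ℝ) 1)
    (hM : ∀ i j, |M i j| ≤ α) (hMhat : ∀ i j, |Mhat i j| ≤ α) :
    hellingerSqM (M.map f) (Mhat.map f) ≥
      sInf ((fun ξ => (deriv f ξ) ^ 2 / (8 * f ξ * (1 - f ξ))) '' Set.Icc (-α) α) *
        frobeniusNorm (M - Mhat) ^ 2 / (d1 * d2) :=
  hellinger_lower_bound_frobenius_general d1 d2 α f M Mhat hM hMhat

end
end

section
/- Let K = {M ∈ ℝ^{d1×d2} : ‖M‖_* ≤ α√(r d1 d2), ‖M‖_∞ ≤ α}. Let γ ≤ 1 be such that r/γ² is an integer and r/γ² ≤ d1. Then there exists a finite set 𝒳 ⊂ K with |𝒳| ≥ exp(r d2/(16 γ²)) such that: (1) every entry of every X ∈ 𝒳 satisfies |X_{i,j}| = αγ; and (2) for all distinct X, X' ∈ 𝒳, ‖X − X'‖_F² > α²γ² d1 d2 / 2. -/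
open Matrix

noncomputable section

/-- Nuclear (Schatten-1) norm: sum of singular values. -/
def nuclearNorm {d1 d2 : ℕ} (M : Matrix (Fin d1) (Fin d2) ℝ) : ℝ :=
  ∑ i, Real.sqrt ((show (Mᵀ * M).IsHermitian by
    simpa [Matrix.conjTranspose_eq_transpose_of_trivial] using Matrix.isHermitian_conjTranspose_mul_self M).eigenvalues i)

/-!
Put `k = r / γ²`. A maximal binary code of length `n = k d2` with minimum Hamming distance
`> n / 4` covers the cube by Hamming balls of radius `n / 4`; each such ball has at most
`3^(n/4) ∑_y 3^(-d(c, y)) = 3^(n/4) (4/3)^n` points, so the code has at least `exp(n / 16)` words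
(Gilbert–Varshamov). A word becomes a `k × d2` matrix of entries `±αγ`, whose rows are repeated
periodically (row `i` is row `i mod k`) to fill `d1` rows. These matrices have rank at most `k`, so
their nuclear norm is at most `√k ‖X‖_F = α √(r d1 d2)`. Every row of the small matrix occurs at
least `⌊d1/k⌋ > d1 / (2k)` times, hence two distinct words give squared Frobenius distance at least
`4 α² γ² ⌊d1/k⌋ · n / 4 > α² γ² d1 d2 / 2`.
-/

open Finset Real

-- After raising to the 16th power this reduces to `e ≤ 3` and `2 ^ 16 ≤ 3 ^ 11`.
theorem exp_div_sixteen_mul_le {n t : ℕ} (h : 4 * t ≤ n) :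
    exp (n / 16) * ((4 / 3) ^ n * 3 ^ t) ≤ 2 ^ n := by
  refine le_of_pow_le_pow_left₀ (by norm_num : 16 ≠ 0) (by positivity) ?_
  have hexp : exp ((n : ℝ) / 16) ^ 16 = exp 1 ^ n := by
    rw [← Real.exp_nat_mul, ← Real.exp_nat_mul]; ring_nf
  calc (exp (n / 16) * ((4 / 3) ^ n * 3 ^ t)) ^ 16
      = exp 1 ^ n * ((4 / 3 : ℝ) ^ 16) ^ n * (3 ^ 16) ^ t := by
        rw [mul_pow, mul_pow, hexp, ← pow_mul, ← pow_mul, ← pow_mul, ← pow_mul, mul_comm n,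
          mul_comm t, mul_assoc]
    _ ≤ 3 ^ n * ((4 / 3 : ℝ) ^ 16) ^ n * (3 ^ 4) ^ n := by
        gcongr
        · exact exp_one_lt_three.le
        · rw [← pow_mul, ← pow_mul]
          exact pow_le_pow_right₀ (by norm_num) (by omega)
    _ = (3 * (4 / 3 : ℝ) ^ 16 * 3 ^ 4) ^ n := by rw [mul_pow, mul_pow]
    _ ≤ (2 ^ 16) ^ n := by gcongr; norm_num
    _ = (2 ^ n) ^ 16 := by rw [← pow_mul, ← pow_mul, mul_comm]

section HammingCode

variable {ι : Type*} [Fintype ι] [DecidableEq ι]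

theorem sum_inv_three_pow_hammingDist (c : ι → Bool) :
    ∑ y : ι → Bool, (3⁻¹ : ℝ) ^ hammingDist c y = (4 / 3) ^ Fintype.card ι := by
  have hfactor (y : ι → Bool) :
      (3⁻¹ : ℝ) ^ hammingDist c y = ∏ i, if c i = y i then 1 else 3⁻¹ := by
    rw [Finset.prod_ite, Finset.prod_const_one, one_mul, Finset.prod_const, hammingDist,
      Finset.filter_not]
  have hfactor_sum (i : ι) : ∑ b : Bool, (if c i = b then (1 : ℝ) else 3⁻¹) = 4 / 3 := by
    cases c i <;> norm_num
  simp_rw [hfactor]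
  rw [← Fintype.prod_sum fun i b ↦ if c i = b then (1 : ℝ) else 3⁻¹,
    Finset.prod_congr rfl fun i _ ↦ hfactor_sum i, Finset.prod_const, Finset.card_univ]

theorem card_filter_hammingDist_le_le (c : ι → Bool) (t : ℕ) :
    (#{y | hammingDist c y ≤ t} : ℝ) ≤ (4 / 3) ^ Fintype.card ι * 3 ^ t := by
  rw [← sum_inv_three_pow_hammingDist c, Finset.sum_mul, Finset.card_eq_sum_ones, Nat.cast_sum,
    Nat.cast_one, Finset.sum_filter]
  gcongr with y
  split_ifs with hy
  · rw [inv_pow, inv_mul_eq_div, one_le_div₀ (by positivity)]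
    exact pow_le_pow_right₀ (by norm_num) hy
  · positivity

theorem exists_maximal_code (D : ℕ) (hD : 0 < D) :
    ∃ C : Finset (ι → Bool), (C : Set (ι → Bool)).Pairwise (fun c c' ↦ D ≤ hammingDist c c') ∧
      ∀ y, ∃ c ∈ C, hammingDist c y < D := by
  obtain ⟨C, hC, hmax⟩ := Finset.exists_max_image
    {C : Finset (ι → Bool) | (C : Set (ι → Bool)).Pairwise (fun c c' ↦ D ≤ hammingDist c c')}
    Finset.card ⟨∅, by simp⟩
  rw [Finset.mem_filter] at hC
  refine ⟨C, hC.2, fun y ↦ ?_⟩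
  by_contra! hfar
  have hy : y ∉ C := fun hy ↦ by simpa [hD.ne'] using hfar y hy
  have hinsert : ((insert y C : Finset _) : Set (ι → Bool)).Pairwise
      (fun c c' ↦ D ≤ hammingDist c c') := by
    rw [Finset.coe_insert]
    exact hC.2.insert fun c hc _ ↦ ⟨by rw [hammingDist_comm]; exact hfar c hc, hfar c hc⟩
  have := hmax _ (Finset.mem_filter.mpr ⟨Finset.mem_univ _, hinsert⟩)
  rw [Finset.card_insert_of_notMem hy] at this
  omega

theorem exists_code_two_pow_le (D : ℕ) (hD : 0 < D) :
    ∃ C : Finset (ι → Bool), (C : Set (ι → Bool)).Pairwise (fun c c' ↦ D ≤ hammingDist c c') ∧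
      (2 : ℝ) ^ Fintype.card ι ≤ #C * ((4 / 3) ^ Fintype.card ι * 3 ^ (D - 1)) := by
  obtain ⟨C, hC, hcover⟩ := exists_maximal_code (ι := ι) D hD
  refine ⟨C, hC, ?_⟩
  have hunion : (univ : Finset (ι → Bool)) ⊆ C.biUnion fun c ↦ {y | hammingDist c y ≤ D - 1} :=
    fun y _ ↦ by
      obtain ⟨c, hc, hy⟩ := hcover y
      exact mem_biUnion.2 ⟨c, hc, mem_filter.2 ⟨mem_univ _, by omega⟩⟩
  calc (2 : ℝ) ^ Fintype.card ι = #(univ : Finset (ι → Bool)) := by simp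
    _ ≤ ∑ c ∈ C, (#{y | hammingDist c y ≤ D - 1} : ℝ) := by
        exact_mod_cast (card_le_card hunion).trans card_biUnion_le
    _ ≤ ∑ _c ∈ C, (4 / 3 : ℝ) ^ Fintype.card ι * 3 ^ (D - 1) :=
        sum_le_sum fun c _ ↦ card_filter_hammingDist_le_le c _
    _ = _ := by rw [sum_const, nsmul_eq_mul]

/-- **Gilbert–Varshamov bound** with relative distance `1/4`. -/
theorem exists_code_quarter_dist :
    ∃ C : Finset (ι → Bool),
      (C : Set (ι → Bool)).Pairwise (fun c c' ↦ Fintype.card ι ≤ 4 * hammingDist c c') ∧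
      exp (Fintype.card ι / 16) ≤ #C := by
  obtain ⟨C, hC, hcard⟩ := exists_code_two_pow_le (ι := ι) (Fintype.card ι / 4 + 1) (by omega)
  refine ⟨C, hC.mono' fun c c' h ↦ by omega, ?_⟩
  have hball := exp_div_sixteen_mul_le (n := Fintype.card ι) (t := Fintype.card ι / 4)
    (Nat.mul_div_le _ _)
  rw [Nat.add_sub_cancel] at hcard
  exact le_of_mul_le_mul_right (hball.trans hcard) (by positivity)

end HammingCode

theorem nuclearNorm_eq_sum_sqrt_eigenvalues {d1 d2 : ℕ} (M : Matrix (Fin d1) (Fin d2) ℝ) :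
    nuclearNorm M = ∑ i, √((isHermitian_conjTranspose_mul_self M).eigenvalues i) := rfl

theorem frobeniusNorm_sq {d1 d2 : ℕ} (M : Matrix (Fin d1) (Fin d2) ℝ) :
    frobeniusNorm M ^ 2 = ∑ i, ∑ j, M i j ^ 2 :=
  sq_sqrt (by positivity)

theorem sum_eigenvalues_conjTranspose_mul_self {m n : Type*} [Fintype m] [Fintype n]
    [DecidableEq n] (M : Matrix m n ℝ) :
    ∑ j, (isHermitian_conjTranspose_mul_self M).eigenvalues j = ∑ i, ∑ j, M i j ^ 2 := by
  have htrace := (isHermitian_conjTranspose_mul_self M).trace_eq_sum_eigenvalues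
  simp only [RCLike.ofReal_real_eq_id, id] at htrace
  rw [← htrace, trace, sum_comm]
  simp [mul_apply, sq]

theorem nuclearNorm_le_sqrt_rank_mul_frobeniusNorm {d1 d2 : ℕ}
    (M : Matrix (Fin d1) (Fin d2) ℝ) : nuclearNorm M ≤ √M.rank * frobeniusNorm M := by
  classical
  rw [nuclearNorm_eq_sum_sqrt_eigenvalues]
  set hM := isHermitian_conjTranspose_mul_self M
  have hnonneg : ∀ i, 0 ≤ hM.eigenvalues i := eigenvalues_conjTranspose_mul_self_nonneg M
  set S : Finset (Fin d2) := {i | hM.eigenvalues i ≠ 0}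
  have hS : #S = M.rank := by
    rw [← rank_conjTranspose_mul_self, hM.rank_eq_card_non_zero_eigs, Fintype.card_subtype]
  calc ∑ i, √(hM.eigenvalues i) = ∑ i ∈ S, 1 * √(hM.eigenvalues i) := by
        rw [← sum_filter_of_ne (p := fun i ↦ hM.eigenvalues i ≠ 0)
          fun i _ h h0 ↦ h (by rw [h0, sqrt_zero])]
        simp [S]
    _ ≤ √(∑ i ∈ S, 1 ^ 2) * √(∑ i ∈ S, √(hM.eigenvalues i) ^ 2) :=
        sum_mul_le_sqrt_mul_sqrt _ _ _
    _ ≤ √M.rank * √(∑ i, hM.eigenvalues i) := by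
        simp only [one_pow, sum_const, nsmul_one, hS, sq_sqrt (hnonneg _)]
        gcongr
        · exact fun i _ _ ↦ hnonneg i
        · exact subset_univ S
    _ = √M.rank * frobeniusNorm M := by rw [sum_eigenvalues_conjTranspose_mul_self, frobeniusNorm]

section SignMatrix

variable {m n : Type*}

def signMatrix (a : ℝ) (c : m × n → Bool) : Matrix m n ℝ :=
  of fun i j ↦ if c (i, j) then a else -a

theorem abs_signMatrix_apply (a : ℝ) (c : m × n → Bool) (i : m) (j : n) :
    |signMatrix a c i j| = |a| := by
  simp only [signMatrix, of_apply]
  split_ifs <;> simp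

theorem sum_sq_sub_signMatrix [Fintype m] [Fintype n] [DecidableEq m] [DecidableEq n] (a : ℝ)
    (c c' : m × n → Bool) :
    ∑ i, ∑ j, (signMatrix a c i j - signMatrix a c' i j) ^ 2 = 4 * a ^ 2 * hammingDist c c' := by
  have hentry (p : m × n) : (signMatrix a c p.1 p.2 - signMatrix a c' p.1 p.2) ^ 2 =
      if c p ≠ c' p then 4 * a ^ 2 else 0 := by
    cases h : c p <;> cases h' : c' p <;> simp [signMatrix, h, h'] <;> ring
  rw [← Fintype.sum_prod_type', Fintype.sum_congr _ _ hentry, sum_ite, sum_const_zero, add_zero,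
    sum_const, nsmul_eq_mul, hammingDist, mul_comm]

end SignMatrix

theorem le_sum_comp_of_le_card_fiber {α β : Type*} [Fintype α] [Fintype β] [DecidableEq β]
    (φ : α → β) {f : β → ℝ} (hf : ∀ b, 0 ≤ f b) {q : ℕ}
    (hq : ∀ b, q ≤ Fintype.card {a // φ a = b}) :
    q * ∑ b, f b ≤ ∑ a, f (φ a) := by
  rw [← Fintype.sum_fiberwise' φ f, mul_sum]
  gcongr with b
  rw [sum_const, card_univ, nsmul_eq_mul]
  gcongr
  · exact hf b
  · exact_mod_cast hq b

theorem div_le_card_ofNat_eq {d k : ℕ} [NeZero k] (l : Fin k) :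
    d / k ≤ Fintype.card {i : Fin d // Fin.ofNat k i = l} := by
  have hlt (a : Fin (d / k)) : l + k * a < d :=
    calc l + k * a < k * (a + 1) := by rw [mul_add_one]; omega
      _ ≤ k * (d / k) := Nat.mul_le_mul_left _ a.2
      _ ≤ d := Nat.mul_div_le d k
  have hrow (a : Fin (d / k)) : Fin.ofNat k (l + k * a) = l := by
    ext
    simp [Fin.ofNat, Nat.add_mul_mod_self_left, Nat.mod_eq_of_lt l.2]
  let row (a : Fin (d / k)) : {i : Fin d // Fin.ofNat k i = l} := ⟨⟨l + k * a, hlt a⟩, hrow a⟩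
  have hrow_inj : Function.Injective row := fun a b h ↦ by
    have : l + k * a = l + k * b := congrArg (fun i ↦ (i.1 : ℕ)) h
    ext
    exact Nat.eq_of_mul_eq_mul_left (NeZero.pos k) (by omega)
  simpa using Fintype.card_le_of_injective row hrow_inj

section PeriodicSignMatrix

variable (d : ℕ) {k n : ℕ} [NeZero k] (a : ℝ)

def periodicSignMatrix (c : Fin k × Fin n → Bool) : Matrix (Fin d) (Fin n) ℝ :=
  (signMatrix a c).submatrix (fun i ↦ Fin.ofNat k i) id

theorem abs_periodicSignMatrix_apply (c : Fin k × Fin n → Bool) (i : Fin d) (j : Fin n) :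
    |periodicSignMatrix d a c i j| = |a| :=
  abs_signMatrix_apply a c _ j

theorem nuclearNorm_periodicSignMatrix_le (c : Fin k × Fin n → Bool) :
    nuclearNorm (periodicSignMatrix d a c) ≤ |a| * √(k * d * n) := by
  have hrank : (periodicSignMatrix d a c).rank ≤ k :=
    (rank_submatrix_le _ _ _).trans ((rank_le_card_height _).trans_eq (Fintype.card_fin k))
  have hentry (i : Fin d) (j : Fin n) : periodicSignMatrix d a c i j ^ 2 = a ^ 2 := by
    rw [← sq_abs, abs_periodicSignMatrix_apply, sq_abs]
  have hfrob : frobeniusNorm (periodicSignMatrix d a c) = |a| * √(d * n) := by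
    simp only [frobeniusNorm, hentry, sum_const, card_univ, Fintype.card_fin, nsmul_eq_mul]
    rw [← sqrt_sq_eq_abs, ← sqrt_mul (sq_nonneg a)]
    ring_nf
  calc nuclearNorm (periodicSignMatrix d a c)
      ≤ √(periodicSignMatrix d a c).rank * frobeniusNorm (periodicSignMatrix d a c) :=
        nuclearNorm_le_sqrt_rank_mul_frobeniusNorm _
    _ ≤ √k * (|a| * √(d * n)) := by rw [hfrob]; gcongr
    _ = |a| * √(k * d * n) := by rw [mul_assoc (k : ℝ), sqrt_mul (Nat.cast_nonneg k)]; ring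

theorem mul_hammingDist_le_frobeniusNorm_sub_sq (c c' : Fin k × Fin n → Bool) :
    4 * a ^ 2 * (d / k : ℕ) * hammingDist c c' ≤
      frobeniusNorm (periodicSignMatrix d a c - periodicSignMatrix d a c') ^ 2 :=
  calc 4 * a ^ 2 * (d / k : ℕ) * hammingDist c c'
      = (d / k : ℕ) * ∑ l, ∑ j, (signMatrix a c l j - signMatrix a c' l j) ^ 2 := by
        rw [sum_sq_sub_signMatrix]; ring
    _ ≤ ∑ i : Fin d, ∑ j,
          (signMatrix a c (Fin.ofNat k i) j - signMatrix a c' (Fin.ofNat k i) j) ^ 2 :=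
        le_sum_comp_of_le_card_fiber (fun i : Fin d ↦ Fin.ofNat k i)
          (f := fun l ↦ ∑ j, (signMatrix a c l j - signMatrix a c' l j) ^ 2)
          (fun _ ↦ by positivity) div_le_card_ofNat_eq
    _ = frobeniusNorm (periodicSignMatrix d a c - periodicSignMatrix d a c') ^ 2 := by
        rw [frobeniusNorm_sq]; rfl

theorem half_mul_lt_frobeniusNorm_sub_sq (ha : a ≠ 0) (hkd : k ≤ d)
    {c c' : Fin k × Fin n → Bool} (hne : c ≠ c') (hdist : k * n ≤ 4 * hammingDist c c') :
    a ^ 2 * d * n / 2 <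
      frobeniusNorm (periodicSignMatrix d a c - periodicSignMatrix d a c') ^ 2 := by
  have hpos : 0 < hammingDist c c' := hammingDist_pos.2 hne
  have hblock : 0 < d / k := Nat.div_pos hkd (NeZero.pos k)
  have hrows : d < k * (d / k + 1) := Nat.lt_mul_div_succ d (NeZero.pos k)
  have hhalf : d + 1 ≤ 2 * k * (d / k) := by nlinarith
  have hcount : d * n < 8 * (d / k) * hammingDist c c' := by
    nlinarith [Nat.mul_le_mul_right n hhalf, Nat.mul_pos hblock hpos]
  have hcount' : (d * n : ℝ) < 8 * (d / k : ℕ) * hammingDist c c' := by exact_mod_cast hcount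
  calc a ^ 2 * d * n / 2 = a ^ 2 / 2 * (d * n) := by ring
    _ < a ^ 2 / 2 * (8 * (d / k : ℕ) * hammingDist c c') := by gcongr
    _ = 4 * a ^ 2 * (d / k : ℕ) * hammingDist c c' := by ring
    _ ≤ _ := mul_hammingDist_le_frobeniusNorm_sub_sq d a c c'

end PeriodicSignMatrix

theorem packing_set_exists_general
    (d1 d2 r : ℕ) (α γ : ℝ)
    (hr : 1 ≤ r) (hα : 0 < α) (hγ : 0 < γ) (hγ1 : γ ≤ 1)
    (hint : ∃ k : ℕ, (r : ℝ) / γ ^ 2 = k) (hle : (r : ℝ) / γ ^ 2 ≤ d1) :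
    ∃ 𝒳 : Finset (Matrix (Fin d1) (Fin d2) ℝ),
      (∀ X ∈ 𝒳, nuclearNorm X ≤ α * Real.sqrt (r * d1 * d2) ∧ ∀ i j, |X i j| ≤ α) ∧
      Real.exp (r * d2 / (16 * γ ^ 2)) ≤ 𝒳.card ∧
      (∀ X ∈ 𝒳, ∀ i j, |X i j| = α * γ) ∧
      (∀ X ∈ 𝒳, ∀ X' ∈ 𝒳, X ≠ X' →
        frobeniusNorm (X - X') ^ 2 > α ^ 2 * γ ^ 2 * d1 * d2 / 2) := by
  obtain ⟨k, hk⟩ := hint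
  have hkr : (k : ℝ) * γ ^ 2 = r := by rw [← hk]; field_simp
  have hk0 : k ≠ 0 := by rintro rfl; simp [eq_comm] at hkr; omega
  have hkd1 : k ≤ d1 := by exact_mod_cast hk ▸ hle
  have : NeZero k := ⟨hk0⟩
  have hαγ : |α * γ| = α * γ := abs_of_pos (by positivity)
  obtain ⟨C, hCdist, hCcard⟩ := exists_code_quarter_dist (ι := Fin k × Fin d2)
  set X := periodicSignMatrix d1 (α * γ) (k := k) (n := d2)
  have hfar : ∀ c ∈ C, ∀ c' ∈ C, c ≠ c' →
      α ^ 2 * γ ^ 2 * d1 * d2 / 2 < frobeniusNorm (X c - X c') ^ 2 := fun c hc c' hc' hne ↦ by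
    rw [← mul_pow]
    exact half_mul_lt_frobeniusNorm_sub_sq d1 _ (by positivity) hkd1 hne
      (by simpa using hCdist hc hc' hne)
  refine ⟨C.image X, ?_, ?_, ?_, ?_⟩
  · simp only [forall_mem_image]
    refine fun c _ ↦ ⟨?_, fun i j ↦ ?_⟩
    · refine (nuclearNorm_periodicSignMatrix_le d1 (α * γ) c).trans_eq ?_
      rw [hαγ, ← hkr, show (k * γ ^ 2 * d1 * d2 : ℝ) = γ ^ 2 * (k * d1 * d2) by ring,
        sqrt_mul (sq_nonneg γ), sqrt_sq hγ.le, mul_assoc]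
    · rw [abs_periodicSignMatrix_apply, hαγ]
      exact mul_le_of_le_one_right hα.le hγ1
  · rw [card_image_of_injOn]
    · convert hCcard using 2
      rw [Fintype.card_prod, Fintype.card_fin, Fintype.card_fin, Nat.cast_mul, ← hkr]
      field_simp
    · refine fun c hc c' hc' h ↦ by_contra fun hne ↦ (hfar c hc c' hc' hne).not_ge ?_
      simp [h, frobeniusNorm]
      positivity
  · simp only [forall_mem_image]
    exact fun c _ i j ↦ (abs_periodicSignMatrix_apply d1 _ c i j).trans hαγ
  · simp only [forall_mem_image]
    exact fun c hc c' hc' hne ↦ hfar c hc c' hc' (ne_of_apply_ne X hne)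

/-- **Lemma (packing set).**  If `γ ≤ 1`, `r/γ²` is an integer and `r/γ² ≤ d1`, there is a
set `𝒳 ⊆ K = {X : ‖X‖_* ≤ α √(r d1 d2), ‖X‖_∞ ≤ α}` of cardinality at least
`exp(r d2/(16 γ²))` whose elements have all entries of absolute value `αγ` and are pairwise
at squared Frobenius distance more than `α²γ² d1 d2/2`. -/
theorem packing_set_exists
    (d1 d2 r : ℕ) (α γ : ℝ)
    (hd1 : 0 < d1) (hd2 : 0 < d2) (hr : 1 ≤ r) (hα : 0 < α) (hγ : 0 < γ) (hγ1 : γ ≤ 1)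
    (hint : ∃ k : ℕ, (r : ℝ) / γ ^ 2 = k) (hle : (r : ℝ) / γ ^ 2 ≤ d1) :
    ∃ 𝒳 : Finset (Matrix (Fin d1) (Fin d2) ℝ),
      (∀ X ∈ 𝒳, nuclearNorm X ≤ α * Real.sqrt (r * d1 * d2) ∧ ∀ i j, |X i j| ≤ α) ∧
      Real.exp (r * d2 / (16 * γ ^ 2)) ≤ 𝒳.card ∧
      (∀ X ∈ 𝒳, ∀ i j, |X i j| = α * γ) ∧
      (∀ X ∈ 𝒳, ∀ X' ∈ 𝒳, X ≠ X' →
        frobeniusNorm (X - X') ^ 2 > α ^ 2 * γ ^ 2 * d1 * d2 / 2) :=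
  packing_set_exists_general d1 d2 r α γ hr hα hγ hγ1 hint hle
end
end

section
/- For the probit link function f(x) = Φ(x/σ), where Φ is the standard Gaussian cumulative distribution function and σ > 0, and any α > 0: the flatness constant satisfies β_α ≤ π σ² e^{α²/(2σ²)} and the steepness constant satisfies L_α ≤ 8(α/σ + 1)/σ. -/
noncomputable section

/-- Steepness constant `L_a`. -/
def steepness (f : ℝ → ℝ) (a : ℝ) : ℝ :=
  sSup ((fun x => |deriv f x| / (f x * (1 - f x))) '' Set.Icc (-a) a)

/-- Flatness constant `β_a`. -/
def flatness (f : ℝ → ℝ) (a : ℝ) : ℝ :=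
  sSup ((fun x => f x * (1 - f x) / (deriv f x) ^ 2) '' Set.Icc (-a) a)

/-- Standard Gaussian cumulative distribution function
`Φ(t) = (1/√(2π)) ∫_{-∞}^t e^{-s²/2} ds`. -/
def stdGaussianCDF (t : ℝ) : ℝ :=
  (Real.sqrt (2 * Real.pi))⁻¹ * ∫ s in Set.Iic t, Real.exp (-s ^ 2 / 2)

/-!
Put `t = x / σ` and `g t = e^{-t²/2}`. Then `f' = g t / (σ √(2π))`, `1 - Φ t = J t / √(2π)` and
`Φ t = J (-t) / √(2π)` with the Gaussian tail `J t = ∫_t^∞ g`, so both constants reduce to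
two-sided bounds on `J t · J (-t)` in terms of `g t`, and by symmetry we may take `t ≥ 0`.
From above, `g (u + t) ≤ g t · g u` gives `J t ≤ (√(2π) / 2) g t`, while `J (-t) ≤ √(2π)`.
From below, `g ≥ g t / 2` on `(t, t + 1 / (2 (t + 1))]` gives `J t ≥ g t / (4 (t + 1))`,
while `J (-t) ≥ J 0 = √(2π) / 2`.
-/

open Real MeasureTheory Set

def gaussianTail (t : ℝ) : ℝ := ∫ s in Ioi t, exp (-s ^ 2 / 2)

lemma integrable_exp_neg_sq_div_two : Integrable fun s : ℝ => exp (-s ^ 2 / 2) :=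
  (integrable_exp_neg_mul_sq (by norm_num : (0 : ℝ) < 1 / 2)).congr
    (ae_of_all _ fun s => by ring_nf)

lemma integral_exp_neg_sq_div_two : ∫ s, exp (-s ^ 2 / 2) = √(2 * π) := by
  have h := integral_gaussian (1 / 2)
  ring_nf at h ⊢
  exact h

lemma gaussianTail_zero : gaussianTail 0 = √(2 * π) / 2 := by
  unfold gaussianTail
  have h := integral_gaussian_Ioi (1 / 2)
  ring_nf at h ⊢
  exact h

lemma gaussianTail_neg (t : ℝ) : gaussianTail (-t) = ∫ s in Iic t, exp (-s ^ 2 / 2) := by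
  simp only [gaussianTail, ← integral_comp_neg_Iic, neg_sq]

lemma gaussianTail_add_gaussianTail_neg (t : ℝ) :
    gaussianTail t + gaussianTail (-t) = √(2 * π) := by
  rw [gaussianTail_neg, add_comm, gaussianTail,
    intervalIntegral.integral_Iic_add_Ioi integrable_exp_neg_sq_div_two.integrableOn
      integrable_exp_neg_sq_div_two.integrableOn,
    integral_exp_neg_sq_div_two]

lemma gaussianTail_pos (t : ℝ) : 0 < gaussianTail t :=
  have : NeZero (volume.restrict (Ioi t)) := ⟨by simp [Measure.restrict_eq_zero]⟩
  integral_exp_pos integrable_exp_neg_sq_div_two.integrableOn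

lemma gaussianTail_antitone : Antitone gaussianTail := fun _ _ hab =>
  setIntegral_mono_set integrable_exp_neg_sq_div_two.integrableOn
    (ae_of_all _ fun _ => (exp_pos _).le) (Ioi_subset_Ioi hab).eventuallyLE

lemma gaussianTail_le_of_nonneg {t : ℝ} (ht : 0 ≤ t) :
    gaussianTail t ≤ √(2 * π) / 2 * exp (-t ^ 2 / 2) := by
  have hshift : ∫ u in Ioi 0, exp (-(u + t) ^ 2 / 2) = gaussianTail t := by
    have h := (measurePreserving_add_right volume t).setIntegral_preimage_emb
      (measurableEmbedding_addRight t) (fun s => exp (-s ^ 2 / 2)) (Ioi t)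
    rwa [preimage_add_const_Ioi, sub_self] at h
  calc gaussianTail t = ∫ u in Ioi 0, exp (-(u + t) ^ 2 / 2) := hshift.symm
    _ ≤ ∫ u in Ioi 0, exp (-t ^ 2 / 2) * exp (-u ^ 2 / 2) := by
      refine setIntegral_mono_on (integrable_exp_neg_sq_div_two.comp_add_right t).integrableOn
        (integrable_exp_neg_sq_div_two.const_mul _).integrableOn measurableSet_Ioi
        fun u (hu : 0 < u) => ?_
      rw [← exp_add]
      gcongr
      nlinarith [mul_nonneg hu.le ht]
    _ = √(2 * π) / 2 * exp (-t ^ 2 / 2) := by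
      rw [integral_const_mul, ← gaussianTail, gaussianTail_zero, mul_comm]

lemma half_exp_neg_sq_div_two_le_of_mem_Ioc {t s : ℝ} (ht : 0 ≤ t)
    (hs : s ∈ Ioc t (t + 1 / (2 * (t + 1)))) :
    exp (-t ^ 2 / 2) / 2 ≤ exp (-s ^ 2 / 2) := by
  obtain ⟨hts, hst⟩ := hs
  have hsq : s ^ 2 / 2 ≤ t ^ 2 / 2 + 5 / 8 := by
    have hδ : t * (1 / (2 * (t + 1))) ≤ 1 / 2 := by
      rw [mul_one_div, div_le_div_iff₀ (by positivity) two_pos]; linarith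
    have hδ' : 1 / (2 * (t + 1)) ≤ 1 / 2 := by gcongr; linarith
    nlinarith [one_div_pos.2 (by positivity : (0 : ℝ) < 2 * (t + 1))]
  have hexp : 1 / 2 ≤ exp (-(5 / 8)) := by
    rw [exp_neg, one_div]
    refine inv_anti₀ (exp_pos _) ?_
    calc exp (5 / 8) ≤ exp (log 2) := exp_le_exp.2 (by linarith [log_two_gt_d9])
      _ = 2 := exp_log two_pos
  calc exp (-t ^ 2 / 2) / 2 ≤ exp (-t ^ 2 / 2) * exp (-(5 / 8)) := by
        rw [div_eq_mul_one_div]; gcongr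
    _ ≤ exp (-s ^ 2 / 2) := by rw [← exp_add]; gcongr; linarith

lemma exp_div_le_gaussianTail {t : ℝ} (ht : 0 ≤ t) :
    exp (-t ^ 2 / 2) / (4 * (t + 1)) ≤ gaussianTail t := by
  set δ := 1 / (2 * (t + 1)) with hδ
  calc exp (-t ^ 2 / 2) / (4 * (t + 1))
        = exp (-t ^ 2 / 2) / 2 * volume.real (Ioc t (t + δ)) := by
        rw [volume_real_Ioc_of_le (le_add_of_nonneg_right (by positivity)),
          add_sub_cancel_left, hδ]
        field_simp
        ring
    _ ≤ ∫ s in Ioc t (t + δ), exp (-s ^ 2 / 2) :=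
      setIntegral_ge_of_const_le_real measurableSet_Ioc measure_Ioc_lt_top.ne
        (fun _ hs => half_exp_neg_sq_div_two_le_of_mem_Ioc ht hs)
        integrable_exp_neg_sq_div_two.integrableOn
    _ ≤ gaussianTail t :=
      setIntegral_mono_set integrable_exp_neg_sq_div_two.integrableOn
        (ae_of_all _ fun _ => (exp_pos _).le) Ioc_subset_Ioi_self.eventuallyLE

lemma gaussianTail_le_sqrt (t : ℝ) : gaussianTail t ≤ √(2 * π) := by
  linarith [gaussianTail_add_gaussianTail_neg t, gaussianTail_pos (-t)]

lemma gaussianTail_mul_gaussianTail_neg_le (t : ℝ) :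
    gaussianTail t * gaussianTail (-t) ≤ π * exp (-t ^ 2 / 2) := by
  wlog ht : 0 ≤ t generalizing t
  · simpa only [neg_neg, neg_sq, mul_comm (gaussianTail t)] using this (-t) (by linarith)
  calc gaussianTail t * gaussianTail (-t) ≤ √(2 * π) / 2 * exp (-t ^ 2 / 2) * √(2 * π) :=
        mul_le_mul (gaussianTail_le_of_nonneg ht) (gaussianTail_le_sqrt _)
          (gaussianTail_pos _).le (by positivity)
    _ = √(2 * π) * √(2 * π) / 2 * exp (-t ^ 2 / 2) := by ring
    _ = π * exp (-t ^ 2 / 2) := by rw [mul_self_sqrt (by positivity)]; ring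

lemma le_gaussianTail_mul_gaussianTail_neg (t : ℝ) :
    √(2 * π) * exp (-t ^ 2 / 2) / (8 * (|t| + 1)) ≤ gaussianTail t * gaussianTail (-t) := by
  wlog ht : 0 ≤ t generalizing t
  · simpa only [neg_neg, neg_sq, abs_neg, mul_comm (gaussianTail t)] using
      this (-t) (by linarith)
  have hneg : √(2 * π) / 2 ≤ gaussianTail (-t) :=
    gaussianTail_zero ▸ gaussianTail_antitone (neg_nonpos.2 ht)
  calc √(2 * π) * exp (-t ^ 2 / 2) / (8 * (|t| + 1))
        = exp (-t ^ 2 / 2) / (4 * (t + 1)) * (√(2 * π) / 2) := by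
          rw [abs_of_nonneg ht]; field_simp; ring
    _ ≤ gaussianTail t * gaussianTail (-t) :=
      mul_le_mul (exp_div_le_gaussianTail ht) hneg (by positivity) (gaussianTail_pos _).le

lemma stdGaussianCDF_eq_gaussianTail_neg (t : ℝ) :
    stdGaussianCDF t = (√(2 * π))⁻¹ * gaussianTail (-t) := by
  rw [gaussianTail_neg, stdGaussianCDF]

lemma one_sub_stdGaussianCDF (t : ℝ) :
    1 - stdGaussianCDF t = (√(2 * π))⁻¹ * gaussianTail t := by
  have hsum := gaussianTail_add_gaussianTail_neg t
  rw [stdGaussianCDF_eq_gaussianTail_neg]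
  field_simp
  linarith

lemma hasDerivAt_stdGaussianCDF (t : ℝ) :
    HasDerivAt stdGaussianCDF ((√(2 * π))⁻¹ * exp (-t ^ 2 / 2)) t := by
  have hint := integrable_exp_neg_sq_div_two
  have hsplit : stdGaussianCDF = fun u => (√(2 * π))⁻¹ *
      ((∫ s in Iic 0, exp (-s ^ 2 / 2)) + ∫ s in (0 : ℝ)..u, exp (-s ^ 2 / 2)) := by
    funext u
    rw [stdGaussianCDF,
      ← intervalIntegral.integral_Iic_sub_Iic hint.integrableOn hint.integrableOn, add_sub_cancel]
  have hcont : Continuous fun s : ℝ => exp (-s ^ 2 / 2) := by fun_prop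
  rw [hsplit]
  exact ((intervalIntegral.integral_hasDerivAt_right hint.intervalIntegrable
    hcont.aestronglyMeasurable.stronglyMeasurableAtFilter hcont.continuousAt).const_add
      _).const_mul _

lemma stdGaussianCDF_mul_one_sub_le (t : ℝ) :
    stdGaussianCDF t * (1 - stdGaussianCDF t) ≤ exp (-t ^ 2 / 2) / 2 := by
  rw [one_sub_stdGaussianCDF, stdGaussianCDF_eq_gaussianTail_neg]
  calc (√(2 * π))⁻¹ * gaussianTail (-t) * ((√(2 * π))⁻¹ * gaussianTail t)
        = gaussianTail t * gaussianTail (-t) / (√(2 * π) * √(2 * π)) := by ring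
    _ ≤ π * exp (-t ^ 2 / 2) / (2 * π) := by
      rw [mul_self_sqrt (by positivity)]
      exact div_le_div_of_nonneg_right (gaussianTail_mul_gaussianTail_neg_le t) (by positivity)
    _ = exp (-t ^ 2 / 2) / 2 := by field_simp

lemma le_stdGaussianCDF_mul_one_sub (t : ℝ) :
    exp (-t ^ 2 / 2) / (8 * √(2 * π) * (|t| + 1)) ≤
      stdGaussianCDF t * (1 - stdGaussianCDF t) := by
  rw [one_sub_stdGaussianCDF, stdGaussianCDF_eq_gaussianTail_neg]
  calc exp (-t ^ 2 / 2) / (8 * √(2 * π) * (|t| + 1))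
        = √(2 * π) * exp (-t ^ 2 / 2) / (8 * (|t| + 1)) / (√(2 * π) * √(2 * π)) := by
          field_simp
    _ ≤ gaussianTail t * gaussianTail (-t) / (√(2 * π) * √(2 * π)) :=
      div_le_div_of_nonneg_right (le_gaussianTail_mul_gaussianTail_neg t) (by positivity)
    _ = (√(2 * π))⁻¹ * gaussianTail (-t) * ((√(2 * π))⁻¹ * gaussianTail t) := by ring

lemma hasDerivAt_stdGaussianCDF_div (σ x : ℝ) :
    HasDerivAt (fun x => stdGaussianCDF (x / σ))
      ((√(2 * π))⁻¹ * exp (-(x / σ) ^ 2 / 2) / σ) x := by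
  simpa only [mul_one_div, Function.comp_def] using
    (hasDerivAt_stdGaussianCDF (x / σ)).comp x ((hasDerivAt_id' x).div_const σ)

lemma probit_flatness_ratio_le {σ : ℝ} (hσ : σ ≠ 0) (x : ℝ) :
    stdGaussianCDF (x / σ) * (1 - stdGaussianCDF (x / σ)) /
        deriv (fun x => stdGaussianCDF (x / σ)) x ^ 2 ≤
      π * σ ^ 2 * exp (x ^ 2 / (2 * σ ^ 2)) := by
  rw [(hasDerivAt_stdGaussianCDF_div σ x).deriv]
  have hinv : exp (-(x / σ) ^ 2 / 2) * exp (x ^ 2 / (2 * σ ^ 2)) = 1 := by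
    rw [← exp_add, ← exp_zero]; congr 1; field_simp; ring
  have hS : √(2 * π) ^ 2 = 2 * π := sq_sqrt (by positivity)
  calc _ ≤ exp (-(x / σ) ^ 2 / 2) / 2 / ((√(2 * π))⁻¹ * exp (-(x / σ) ^ 2 / 2) / σ) ^ 2 :=
        div_le_div_of_nonneg_right (stdGaussianCDF_mul_one_sub_le _) (sq_nonneg _)
    _ = π * σ ^ 2 * exp (x ^ 2 / (2 * σ ^ 2)) := by
      generalize exp (-(x / σ) ^ 2 / 2) = E at hinv ⊢
      have hE : E ≠ 0 := left_ne_zero_of_mul_eq_one hinv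
      field_simp
      rw [hS]
      linear_combination (-(2 * π)) * hinv

lemma probit_steepness_ratio_le {σ : ℝ} (hσ : 0 < σ) (x : ℝ) :
    |deriv (fun x => stdGaussianCDF (x / σ)) x| /
        (stdGaussianCDF (x / σ) * (1 - stdGaussianCDF (x / σ))) ≤ 8 * (|x| / σ + 1) / σ := by
  rw [(hasDerivAt_stdGaussianCDF_div σ x).deriv, abs_of_pos (by positivity)]
  have hlow := le_stdGaussianCDF_mul_one_sub (x / σ)
  rw [div_le_iff₀ (lt_of_lt_of_le (by positivity) hlow)]
  calc (√(2 * π))⁻¹ * exp (-(x / σ) ^ 2 / 2) / σ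
      = 8 * (|x| / σ + 1) / σ * (exp (-(x / σ) ^ 2 / 2) / (8 * √(2 * π) * (|x / σ| + 1))) := by
        rw [abs_div, abs_of_pos hσ]; field_simp
    _ ≤ _ := by gcongr

/-- For the probit link `f(x) = Φ(x/σ)` with `σ > 0` and any `α > 0`, the flatness constant
satisfies `β_α ≤ π σ² e^{α²/(2σ²)}` and the steepness constant satisfies
`L_α ≤ 8 (α/σ + 1)/σ`. -/
theorem probit_steepness_flatness (σ α : ℝ) (hσ : 0 < σ) (hα : 0 < α) :
    flatness (fun x => stdGaussianCDF (x / σ)) α ≤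
      Real.pi * σ ^ 2 * Real.exp (α ^ 2 / (2 * σ ^ 2)) ∧
    steepness (fun x => stdGaussianCDF (x / σ)) α ≤ 8 * (α / σ + 1) / σ := by
  constructor
  · refine Real.sSup_le (forall_mem_image.2 fun x hx => ?_) (by positivity)
    calc _ ≤ π * σ ^ 2 * exp (x ^ 2 / (2 * σ ^ 2)) := probit_flatness_ratio_le hσ.ne' x
      _ ≤ _ := by gcongr π * σ ^ 2 * exp (?_ / _); exact sq_le_sq' hx.1 hx.2
  · refine Real.sSup_le (forall_mem_image.2 fun x hx => ?_) (by positivity)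
    calc _ ≤ 8 * (|x| / σ + 1) / σ := probit_steepness_ratio_le hσ x
      _ ≤ _ := by gcongr; exact abs_le.2 hx

end
end
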